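/- Let ν ∈ (0,1], α > 0, let k ≠ 0 and l be integers, and let η ∈ ℝ. Set ρ_L(t) := √(k² + (η − kt)² + l²). Suppose Q, W : [0,∞) → ℂ are differentiable and solve Q′(t) = −ν ρ_L(t)² Q(t) − i α (l/ρ_L(t)) W(t) and W′(t) = −ν ρ_L(t)² W(t) − (k(η − kt)/ρ_L(t)²) W(t) − i α (l/ρ_L(t)) Q(t). Then for all t ≥ 0: |Q(t)| / (k² + (η − kt)² + l²) ≤ √2 · √(1 + η²) · (1 + t²)^{−1/2} · e^{−ν k² t³ / 24} · √(|Q(0)|² + |W(0)|²). -/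

import Mathlib

/-!
The coupling `± iα (l/ρ_L)` is skew-adjoint, so the energy `E = |Q|² + |W|²` obeys
`E' = -2νρ_L² E + ((ρ_L²)'/ρ_L²) |W|²`. After the integrating factor `e^{2νK}`, `K' = ρ_L²`,
the weighted energy `F` is nonincreasing while `ρ_L²` decreases and `F/ρ_L²` is nonincreasing
while `ρ_L²` increases. Since `ρ_L²` is a quadratic in `t` bounded below by `k² ≥ 1`, this gives
`E(t) e^{2νK(t)} ≤ E(0) ρ_L(t)²`, hence `|Q(t)|/ρ_L(t)² ≤ e^{-νK(t)} √E(0) / ρ_L(t)`.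
Then `K(t) ≥ k²t³/12` yields the enhanced dissipation and `1 + t² ≤ 2(1 + η²) ρ_L(t)²` the
inviscid damping.
-/

/-- The moving-frame frequency modulus `ρ_L(t) = |(k, η - kt, l)|`. -/
noncomputable def rhoL (k l : ℤ) (η t : ℝ) : ℝ :=
  Real.sqrt ((k:ℝ)^2 + (η - (k:ℝ)*t)^2 + (l:ℝ)^2)

open Real Set

theorem le_of_hasDerivAt_nonpos {f f' : ℝ → ℝ} {a b : ℝ} (hab : a ≤ b)
    (hf : ∀ x ∈ Icc a b, HasDerivAt f (f' x) x) (hf' : ∀ x ∈ Ioo a b, f' x ≤ 0) :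
    f b ≤ f a := by
  refine antitoneOn_of_hasDerivWithinAt_nonpos (f' := f') (convex_Icc a b)
    (fun x hx ↦ (hf x hx).continuousAt.continuousWithinAt) (fun x hx ↦ ?_) (fun x hx ↦ ?_)
    ⟨le_rfl, hab⟩ ⟨hab, le_rfl⟩ hab
  · exact (hf x (interior_subset hx)).hasDerivWithinAt
  · exact hf' x (by rwa [interior_Icc] at hx)

theorem div_le_div_of_hasDerivAt_logDeriv_mul {F G s s' : ℝ → ℝ} {a t₀ b : ℝ}
    (hat₀ : a ≤ t₀) (ht₀b : t₀ ≤ b)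
    (hs : ∀ x ∈ Icc a b, HasDerivAt s (s' x) x) (hs_pos : ∀ x ∈ Icc a b, 0 < s x)
    (hs'_nonpos : ∀ x ∈ Ioo a t₀, s' x ≤ 0) (hs'_nonneg : ∀ x ∈ Ioo t₀ b, 0 ≤ s' x)
    (hG : ∀ x ∈ Icc a b, 0 ≤ G x) (hGF : ∀ x ∈ Icc a b, G x ≤ F x)
    (hF : ∀ x ∈ Icc a b, HasDerivAt F (s' x / s x * G x) x) :
    F b / s b ≤ F a / s t₀ := by
  have hsub₁ : Icc a t₀ ⊆ Icc a b := Icc_subset_Icc_right ht₀b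
  have hsub₂ : Icc t₀ b ⊆ Icc a b := Icc_subset_Icc_left hat₀
  have hdescent : F t₀ ≤ F a :=
    le_of_hasDerivAt_nonpos hat₀ (fun x hx ↦ hF x (hsub₁ hx)) fun x hx ↦ by
      have hx' := hsub₁ (Ioo_subset_Icc_self hx)
      exact mul_nonpos_of_nonpos_of_nonneg
        (div_nonpos_of_nonpos_of_nonneg (hs'_nonpos x hx) (hs_pos x hx').le) (hG x hx')
  have hascent : F b / s b ≤ F t₀ / s t₀ := by
    refine le_of_hasDerivAt_nonpos ht₀b (f := fun x ↦ F x / s x)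
      (f' := fun x ↦ s' x * (G x - F x) / s x ^ 2) (fun x hx ↦ ?_) fun x hx ↦ ?_
    · have hx' := hsub₂ hx
      refine ((hF x hx').div (hs x hx') (hs_pos x hx').ne').congr_deriv ?_
      field_simp [(hs_pos x hx').ne']
    · have hx' := hsub₂ (Ioo_subset_Icc_self hx)
      exact div_nonpos_of_nonpos_of_nonneg
        (mul_nonpos_of_nonneg_of_nonpos (hs'_nonneg x hx) (sub_nonpos.2 (hGF x hx')))
        (sq_nonneg _)
  exact hascent.trans (div_le_div_of_nonneg_right hdescent (hs_pos t₀ ⟨hat₀, ht₀b⟩).le)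

theorem HasDerivAt.mul_exp_of_linear {E μ : ℝ → ℝ} {m g x : ℝ}
    (hE : HasDerivAt E (-m * E x + g) x) (hμ : HasDerivAt μ m x) :
    HasDerivAt (fun y ↦ E y * Real.exp (μ y)) (Real.exp (μ x) * g) x :=
  (hE.mul hμ.exp).congr_deriv (by ring)

theorem hasDerivAt_energy {Q W : ℝ → ℂ} {a b c t : ℝ}
    (hQ : HasDerivAt Q (-(a : ℂ) * Q t - Complex.I * (b : ℂ) * W t) t)
    (hW : HasDerivAt W (-(a : ℂ) * W t - (c : ℂ) * W t - Complex.I * (b : ℂ) * Q t) t) :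
    HasDerivAt (fun τ ↦ ‖Q τ‖ ^ 2 + ‖W τ‖ ^ 2)
      (-(2 * a) * (‖Q t‖ ^ 2 + ‖W t‖ ^ 2) - 2 * c * ‖W t‖ ^ 2) t := by
  refine (hQ.norm_sq.add hW.norm_sq).congr_deriv ?_
  simp only [Complex.inner, Complex.sq_norm, Complex.normSq_apply, Complex.mul_re, Complex.mul_im,
    Complex.sub_re, Complex.sub_im, Complex.neg_re, Complex.neg_im, Complex.conj_re,
    Complex.conj_im, Complex.I_re, Complex.I_im, Complex.ofReal_re, Complex.ofReal_im]
  ring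

section Mode

variable (k l : ℤ) (η : ℝ)

noncomputable def rhoLSq (t : ℝ) : ℝ := (k:ℝ)^2 + (η - (k:ℝ)*t)^2 + (l:ℝ)^2

/-- `K(t) = ∫₀ᵗ ρ_L(τ)² dτ`. -/
noncomputable def rhoLSqIntegral (t : ℝ) : ℝ :=
  ((k:ℝ)^2 + (l:ℝ)^2 + η^2) * t - k * η * t^2 + (k:ℝ)^2 * t^3 / 3

theorem rhoL_sq (t : ℝ) : rhoL k l η t ^ 2 = rhoLSq k l η t :=
  Real.sq_sqrt (by positivity)

theorem hasDerivAt_rhoLSq (t : ℝ) :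
    HasDerivAt (rhoLSq k l η) (2 * k * (k * t - η)) t := by
  have h := (((hasDerivAt_id t).const_mul (k:ℝ)).const_sub η).pow 2
  refine ((h.const_add ((k:ℝ)^2)).add_const ((l:ℝ)^2)).congr_deriv ?_
  simp only [id]
  ring

theorem hasDerivAt_rhoLSqIntegral (t : ℝ) :
    HasDerivAt (rhoLSqIntegral k l η) (rhoLSq k l η t) t := by
  have h := (((hasDerivAt_id t).const_mul ((k:ℝ)^2 + (l:ℝ)^2 + η^2)).sub
    ((hasDerivAt_pow 2 t).const_mul ((k:ℝ) * η))).add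
    (((hasDerivAt_pow 3 t).const_mul ((k:ℝ)^2)).div_const 3)
  refine h.congr_deriv ?_
  simp only [rhoLSq]
  push_cast
  ring

theorem rhoLSqIntegral_zero : rhoLSqIntegral k l η 0 = 0 := by
  simp [rhoLSqIntegral]

/-- `K(t) - k²t³/12 = (k² + l²) t + t (η - kt/2)²`. -/
theorem le_rhoLSqIntegral {t : ℝ} (ht : 0 ≤ t) :
    (k:ℝ)^2 * t^3 / 12 ≤ rhoLSqIntegral k l η t := by
  unfold rhoLSqIntegral
  nlinarith [mul_nonneg ht (sq_nonneg (η - k * t / 2)), mul_nonneg ht (sq_nonneg (k:ℝ)),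
    mul_nonneg ht (sq_nonneg (l:ℝ))]

variable {k}

theorem one_le_intCast_sq (hk : k ≠ 0) : (1 : ℝ) ≤ (k:ℝ)^2 := by
  rw [one_le_sq_iff_one_le_abs, ← Int.cast_abs]
  exact_mod_cast Int.one_le_abs hk

theorem one_le_rhoLSq (hk : k ≠ 0) (t : ℝ) : 1 ≤ rhoLSq k l η t := by
  unfold rhoLSq
  nlinarith [one_le_intCast_sq hk, sq_nonneg (η - k * t), sq_nonneg (l:ℝ)]

/-- Since `|k| ≥ 1`, `t² ≤ (kt)² ≤ 2η² + 2(η - kt)²`. -/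
theorem one_add_sq_le_mul_rhoLSq (hk : k ≠ 0) (t : ℝ) :
    1 + t^2 ≤ 2 * (1 + η^2) * rhoLSq k l η t := by
  have hk2 := one_le_intCast_sq hk
  have ht : t^2 ≤ 2 * η^2 + 2 * (η - k * t)^2 := by
    nlinarith [sq_nonneg (k * t - 2 * η), mul_nonneg (sub_nonneg.2 hk2) (sq_nonneg t)]
  unfold rhoLSq
  nlinarith [mul_nonneg (sub_nonneg.2 hk2) (sq_nonneg η), sq_nonneg (l:ℝ),
    mul_nonneg (sq_nonneg η) (sq_nonneg (η - k * t)), mul_nonneg (sq_nonneg η) (sq_nonneg (l:ℝ))]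

theorem mul_exp_rhoLSqIntegral_le (hk : k ≠ 0) {ν : ℝ} {E G : ℝ → ℝ}
    (hG : ∀ t, 0 ≤ G t) (hGE : ∀ t, G t ≤ E t)
    (hE : ∀ t, 0 ≤ t → HasDerivAt E (-(2 * (ν * rhoLSq k l η t)) * E t
      - 2 * (k * (η - k * t) / rhoLSq k l η t) * G t) t)
    {T : ℝ} (hT : 0 ≤ T) :
    E T * exp (2 * ν * rhoLSqIntegral k l η T) ≤ E 0 * rhoLSq k l η T := by
  have hk' : (k:ℝ) ≠ 0 := Int.cast_ne_zero.2 hk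
  have hs_pos (x : ℝ) : 0 < rhoLSq k l η x := one_pos.trans_le (one_le_rhoLSq l η hk x)
  -- `ρ_L²` decreases until `t = η / k` and increases afterwards
  have hs' (x : ℝ) : 2 * k * (k * x - η) = 2 * k^2 * (x - η / k) := by field_simp
  set t₀ := max 0 (min T (η / k))
  have hF (x : ℝ) (hx : x ∈ Icc 0 T) :
      HasDerivAt (fun y ↦ E y * exp (2 * ν * rhoLSqIntegral k l η y))
        (2 * k * (k * x - η) / rhoLSq k l η x * (G x * exp (2 * ν * rhoLSqIntegral k l η x))) x := by
    refine (HasDerivAt.mul_exp_of_linear (g := -2 * (k * (η - k * x) / rhoLSq k l η x) * G x)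
      ((hE x hx.1).congr_deriv (by ring))
      ((hasDerivAt_rhoLSqIntegral k l η x).const_mul (2 * ν))).congr_deriv ?_
    field_simp
    ring
  have hdecr (x : ℝ) (hx : x ∈ Ioo 0 t₀) : 2 * k * (k * x - η) ≤ 0 := by
    have : x < min T (η / k) := (lt_max_iff.1 hx.2).resolve_left hx.1.not_gt
    rw [hs']
    nlinarith [sq_nonneg (k:ℝ), min_le_right T (η / k)]
  have hincr (x : ℝ) (hx : x ∈ Ioo t₀ T) : 0 ≤ 2 * k * (k * x - η) := by
    have : η / k < x :=
      (min_lt_iff.1 ((le_max_right _ _).trans_lt hx.1)).resolve_left hx.2.not_gt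
    rw [hs']
    nlinarith [sq_nonneg (k:ℝ)]
  have hvalley := div_le_div_of_hasDerivAt_logDeriv_mul (le_max_left 0 _)
    (max_le hT (min_le_left T _)) (fun x _ ↦ hasDerivAt_rhoLSq k l η x) (fun x _ ↦ hs_pos x)
    hdecr hincr (fun x _ ↦ mul_nonneg (hG x) (exp_pos _).le)
    (fun x _ ↦ mul_le_mul_of_nonneg_right (hGE x) (exp_pos _).le) hF
  rw [rhoLSqIntegral_zero, mul_zero, exp_zero, mul_one, div_le_iff₀ (hs_pos T)] at hvalley
  calc E T * exp (2 * ν * rhoLSqIntegral k l η T) ≤ E 0 / rhoLSq k l η t₀ * rhoLSq k l η T :=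
        hvalley
    _ ≤ E 0 * rhoLSq k l η T := mul_le_mul_of_nonneg_right
        (div_le_self ((hG 0).trans (hGE 0)) (one_le_rhoLSq l η hk t₀)) (hs_pos T).le

end Mode

theorem inviscid_damping_enhanced_dissipation_u2_general
    (ν α : ℝ) (hν : 0 < ν)
    (k l : ℤ) (hk : k ≠ 0) (η : ℝ)
    (Q W : ℝ → ℂ)
    (hQ : ∀ t : ℝ, 0 ≤ t →
      HasDerivAt Q
        (-((ν * (rhoL k l η t)^2 : ℝ) : ℂ) * Q t
          - Complex.I * ((α * (l:ℝ) / rhoL k l η t : ℝ) : ℂ) * W t) t)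
    (hW : ∀ t : ℝ, 0 ≤ t →
      HasDerivAt W
        (-((ν * (rhoL k l η t)^2 : ℝ) : ℂ) * W t
          - (((k:ℝ) * (η - (k:ℝ)*t) / (rhoL k l η t)^2 : ℝ) : ℂ) * W t
          - Complex.I * ((α * (l:ℝ) / rhoL k l η t : ℝ) : ℂ) * Q t) t) :
    ∀ t : ℝ, 0 ≤ t →
      ‖Q t‖ / ((k:ℝ)^2 + (η - (k:ℝ)*t)^2 + (l:ℝ)^2)
        ≤ Real.sqrt 2 * Real.sqrt (1 + η^2) * (1 + t^2) ^ ((-1 : ℝ)/2) *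
            Real.exp (-(ν * (k:ℝ)^2 * t^3) / 24) *
            Real.sqrt (‖Q 0‖^2 + ‖W 0‖^2) := by
  intro T hT
  change ‖Q T‖ / rhoLSq k l η T ≤ _
  set s := rhoLSq k l η T
  set A := exp (-(ν * (k:ℝ)^2 * T^3) / 24)
  have hs : 0 < s := one_pos.trans_le (one_le_rhoLSq l η hk T)
  have hE (t : ℝ) (ht : 0 ≤ t) := by
    simpa only [rhoL_sq] using hasDerivAt_energy (hQ t ht) (hW t ht)
  have hdecay := mul_exp_rhoLSqIntegral_le l η hk (fun t ↦ sq_nonneg ‖W t‖)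
    (fun t ↦ le_add_of_nonneg_left (sq_nonneg ‖Q t‖)) hE hT
  have hweight : exp (-(2 * ν * rhoLSqIntegral k l η T)) ≤ A ^ 2 := by
    rw [← exp_nat_mul]
    exact exp_le_exp.2 (by
      nlinarith [le_rhoLSqIntegral k l η hT, mul_nonneg hν.le (pow_nonneg hT 3)])
  have hQT : ‖Q T‖ ≤ √(‖Q 0‖^2 + ‖W 0‖^2) * √s * A := by
    refine (pow_le_pow_iff_left₀ (norm_nonneg _) (by positivity) two_ne_zero).1 ?_
    rw [mul_pow, mul_pow, sq_sqrt (by positivity), sq_sqrt hs.le]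
    calc ‖Q T‖^2 ≤ ‖Q T‖^2 + ‖W T‖^2 := le_add_of_nonneg_right (sq_nonneg _)
      _ ≤ (‖Q 0‖^2 + ‖W 0‖^2) * s * exp (-(2 * ν * rhoLSqIntegral k l η T)) := by
          rw [exp_neg, ← div_eq_mul_inv, le_div_iff₀ (exp_pos _)]
          exact hdecay
      _ ≤ (‖Q 0‖^2 + ‖W 0‖^2) * s * A^2 := by gcongr
  have hinv : (√s)⁻¹ ≤ √2 * √(1 + η^2) * (1 + T^2) ^ ((-1 : ℝ)/2) := by
    rw [neg_div, rpow_neg (by positivity), ← sqrt_eq_rpow, ← sqrt_mul zero_le_two,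
      ← div_eq_mul_inv, le_div_iff₀ (by positivity), inv_mul_eq_div, div_le_iff₀ (sqrt_pos.2 hs),
      ← sqrt_mul (by positivity)]
    exact sqrt_le_sqrt (one_add_sq_le_mul_rhoLSq l η hk T)
  calc ‖Q T‖ / s ≤ √(‖Q 0‖^2 + ‖W 0‖^2) * √s * A / s := by gcongr
    _ = (√s)⁻¹ * A * √(‖Q 0‖^2 + ‖W 0‖^2) := by rw [← sqrt_div_self]; ring
    _ ≤ _ := by gcongr

/-- Combined inviscid damping and enhanced dissipation for the second
velocity component at a single nonzero Fourier mode: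
`|Q(t)|/ρ_L(t)² ≤ √2 √(1+η²) (1+t²)^{-1/2} e^{-νk²t³/24} √(|Q(0)|²+|W(0)|²)`. -/
theorem inviscid_damping_enhanced_dissipation_u2
    (ν α : ℝ) (hν : 0 < ν) (hν1 : ν ≤ 1) (hα : 0 < α)
    (k l : ℤ) (hk : k ≠ 0) (η : ℝ)
    (Q W : ℝ → ℂ)
    (hQ : ∀ t : ℝ, 0 ≤ t →
      HasDerivAt Q
        (-((ν * (rhoL k l η t)^2 : ℝ) : ℂ) * Q t
          - Complex.I * ((α * (l:ℝ) / rhoL k l η t : ℝ) : ℂ) * W t) t)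
    (hW : ∀ t : ℝ, 0 ≤ t →
      HasDerivAt W
        (-((ν * (rhoL k l η t)^2 : ℝ) : ℂ) * W t
          - (((k:ℝ) * (η - (k:ℝ)*t) / (rhoL k l η t)^2 : ℝ) : ℂ) * W t
          - Complex.I * ((α * (l:ℝ) / rhoL k l η t : ℝ) : ℂ) * Q t) t) :
    ∀ t : ℝ, 0 ≤ t →
      ‖Q t‖ / ((k:ℝ)^2 + (η - (k:ℝ)*t)^2 + (l:ℝ)^2)
        ≤ Real.sqrt 2 * Real.sqrt (1 + η^2) * (1 + t^2) ^ ((-1 : ℝ)/2) *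
            Real.exp (-(ν * (k:ℝ)^2 * t^3) / 24) *
            Real.sqrt (‖Q 0‖^2 + ‖W 0‖^2) :=
  inviscid_damping_enhanced_dissipation_u2_general ν α hν k l hk η Q W hQ hW
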